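/- arXiv:2406.12537 — 2 statements merged into one kernel-verified Lean document; each statement's English description precedes it below -/
import Mathlib

section
/- For every pair δ ≥ ω > 0 there exists a convex body K in ℝⁿ with diameter δ and thickness ω such that sup_{u≠±v} |w_K(u)−w_K(v)|/ρ(u,v) = √(δ²−ω²); i.e., the Lipschitz constant M_K is optimal within the class of bodies with given diameter and thickness. -/
open scoped RealInnerProductSpace
open Metric Filter

/-- Width of `K` in direction `u`: distance between the two supporting
hyperplanes of `K` orthogonal to the unit vector `u`. -/
noncomputable def widthFn {n : ℕ} (K : Set (EuclideanSpace ℝ (Fin n)))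
    (u : EuclideanSpace ℝ (Fin n)) : ℝ :=
  sSup ((fun x => ⟪x, u⟫) '' K) - sInf ((fun x => ⟪x, u⟫) '' K)

/-- Diameter of `K` in direction `u`: maximal length of a chord of `K` parallel to `u`. -/
noncomputable def dirDiam {n : ℕ} (K : Set (EuclideanSpace ℝ (Fin n)))
    (u : EuclideanSpace ℝ (Fin n)) : ℝ :=
  sSup {d : ℝ | ∃ x ∈ K, ∃ y ∈ K, (∃ t : ℝ, x - y = t • u) ∧ d = dist x y}

/-- Projective spherical distance `ρ(u,v) = arccos |⟨u,v⟩|`. -/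
noncomputable def rho {n : ℕ} (u v : EuclideanSpace ℝ (Fin n)) : ℝ :=
  Real.arccos |⟪u, v⟫|

/-- `e_K(O)`: maximal length of a chord of `K` cut by a line through `O`. -/
noncomputable def eFn {n : ℕ} (K : Set (EuclideanSpace ℝ (Fin n)))
    (O : EuclideanSpace ℝ (Fin n)) : ℝ :=
  sSup {d : ℝ | ∃ x ∈ K, ∃ y ∈ K, Collinear ℝ ({O, x, y} : Set (EuclideanSpace ℝ (Fin n))) ∧
    d = dist x y}

/-- `s_K(u)`: maximal distance between a point of `K` in one supporting hyperplane
orthogonal to `u` and a point of `K` in the other. -/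
noncomputable def sFn {n : ℕ} (K : Set (EuclideanSpace ℝ (Fin n)))
    (u : EuclideanSpace ℝ (Fin n)) : ℝ :=
  sSup {d : ℝ | ∃ A ∈ K, ∃ B ∈ K,
    (∀ x ∈ K, ⟪x, u⟫ ≤ ⟪A, u⟫) ∧ (∀ x ∈ K, ⟪B, u⟫ ≤ ⟪x, u⟫) ∧ d = dist A B}

/-- `r_K(u)`: infimum over diametral chords `[AB]` for `u` and pairs of parallel
supporting hyperplanes `H₁ ∋ A`, `H₂ ∋ B` of the distance between `H₁` and `H₂`. -/
noncomputable def rFn {n : ℕ} (K : Set (EuclideanSpace ℝ (Fin n)))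
    (u : EuclideanSpace ℝ (Fin n)) : ℝ :=
  sInf {d : ℝ | ∃ A ∈ K, ∃ B ∈ K, (∃ t : ℝ, A - B = t • u) ∧ dist A B = dirDiam K u ∧
    ∃ v : EuclideanSpace ℝ (Fin n), ‖v‖ = 1 ∧
      (∀ x ∈ K, ⟪x, v⟫ ≤ ⟪A, v⟫) ∧ (∀ x ∈ K, ⟪B, v⟫ ≤ ⟪x, v⟫) ∧ d = ⟪A - B, v⟫}

/-!
Write `e` for the normal of the slab and `φ₀ = arccos (ω / δ)` for the angle from `±e` at which the
sphere `‖x‖ = δ / 2` leaves the slab. For a unit vector `u` at angle `θ = ρ(u, e)` from `±e`, the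
support value of `K` in direction `u` is attained in the plane of `e` and `u`, at the point of that
sphere at angle `max θ φ₀` from `±e`; as `K = -K`, this gives `w_K(u) = δ cos (max 0 (φ₀ - θ))`.
This equals `ω` at `θ = 0` and is `δ sin φ₀ = √(δ² - ω²)`-Lipschitz in `θ`, while `θ` is
`1`-Lipschitz for `ρ` by the triangle inequality for angles; hence `M_K ≤ √(δ² - ω²)`. Conversely,
for directions at angle `φ` from `e`, `w_K ≥ δ cos (φ₀ - φ)`, whose right derivative at `φ = 0` is
`√(δ² - ω²)`, so the difference quotients against `e` come arbitrarily close to the bound.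
-/

open Real

lemma mul_add_mul_le_of_sq_add_sq_le {a b c d t s : ℝ} (hb : 0 ≤ b) (hd : 0 ≤ d) (ht : 0 ≤ t)
    (hs : 0 ≤ s) (hac : a ≤ c) (habcd : a ^ 2 + b ^ 2 ≤ c ^ 2 + d ^ 2) (hcd : s * c ≤ t * d) :
    a * t + b * s ≤ c * t + d * s := by
  rcases le_total b d with hbd | hdb
  · nlinarith
  -- multiply the goal by `b + d` and use `(b - d) (b + d) ≤ (c - a) (c + a)`
  have hmix : 0 ≤ (c - a) * ((b + d) * t - (c + a) * s) := mul_nonneg (by linarith) (by nlinarith)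
  have hscaled : 0 ≤ (b + d) * ((c - a) * t - (b - d) * s) := by nlinarith
  rcases (add_nonneg hb hd).eq_or_lt with hbd | hbd
  · nlinarith
  · nlinarith [(mul_nonneg_iff_of_pos_left hbd).1 hscaled]

lemma mul_cos_add_mul_sin_le {r φ θ a b : ℝ} (hr : 0 ≤ r) (hφ : φ ∈ Set.Icc 0 (π / 2))
    (hθ : θ ∈ Set.Icc 0 (π / 2)) (hb : 0 ≤ b) (ha : a ≤ r * cos φ)
    (hab : a ^ 2 + b ^ 2 ≤ r ^ 2) :
    a * cos θ + b * sin θ ≤ r * cos (max 0 (φ - θ)) := by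
  obtain ⟨hφ0, hφ1⟩ := hφ
  obtain ⟨hθ0, hθ1⟩ := hθ
  have hsinθ : 0 ≤ sin θ := sin_nonneg_of_nonneg_of_le_pi hθ0 (by linarith)
  have hcosθ : 0 ≤ cos θ := cos_nonneg_of_mem_Icc ⟨by linarith, hθ1⟩
  rcases le_total φ θ with hφθ | hθφ
  · rw [max_eq_left (by linarith), cos_zero, mul_one]
    have hsq : (a * cos θ + b * sin θ) ^ 2 ≤ r ^ 2 := by
      nlinarith [sq_nonneg (a * sin θ - b * cos θ), sin_sq_add_cos_sq θ]
    exact (le_abs_self _).trans (abs_le_of_sq_le_sq hsq hr)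
  · have hcorner : sin θ * cos φ ≤ cos θ * sin φ := by
      have := sin_nonneg_of_nonneg_of_le_pi (sub_nonneg.2 hθφ) (by linarith)
      rw [sin_sub] at this
      linarith
    rw [max_eq_right (by linarith), cos_sub, mul_add, ← mul_assoc, ← mul_assoc]
    refine mul_add_mul_le_of_sq_add_sq_le hb
      (mul_nonneg hr (sin_nonneg_of_nonneg_of_le_pi hφ0 (by linarith))) hcosθ hsinθ ha
      (by nlinarith [sin_sq_add_cos_sq φ]) ?_
    nlinarith

lemma abs_cos_sub_cos_le_sin_mul {φ a b : ℝ} (hφ : φ ≤ π / 2) (ha : a ∈ Set.Icc 0 φ)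
    (hb : b ∈ Set.Icc 0 φ) : |cos a - cos b| ≤ sin φ * |a - b| := by
  refine (convex_Icc 0 φ).norm_image_sub_le_of_norm_deriv_le
    (fun x _ => differentiableAt_cos) (fun x hx => ?_) hb ha
  rw [Real.deriv_cos, norm_neg,
    norm_of_nonneg (sin_nonneg_of_nonneg_of_le_pi hx.1 (by linarith [hx.2, pi_pos]))]
  exact sin_le_sin_of_le_of_le_pi_div_two (by linarith [hx.1, pi_pos]) hφ hx.2

noncomputable def slabBallWidth (δ ω θ : ℝ) : ℝ :=
  δ * cos (max 0 (arccos (ω / δ) - θ))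

section slabBallWidth

variable {δ ω : ℝ}

lemma mul_cos_sub_le_slabBallWidth (hδ : 0 ≤ δ) (θ : ℝ) :
    δ * cos (arccos (ω / δ) - θ) ≤ slabBallWidth δ ω θ := by
  refine mul_le_mul_of_nonneg_left ?_ hδ
  rcases le_total (arccos (ω / δ) - θ) 0 with h | h
  · rw [max_eq_left h, cos_zero]
    exact cos_le_one _
  · rw [max_eq_right h]

variable (hω : 0 < ω) (hωδ : ω ≤ δ)
include hω hωδ

lemma arccos_div_mem_Icc : arccos (ω / δ) ∈ Set.Icc 0 (π / 2) :=
  ⟨arccos_nonneg _, arccos_le_pi_div_two.2 (div_pos hω (hω.trans_le hωδ)).le⟩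

lemma mul_cos_arccos_div : δ * cos (arccos (ω / δ)) = ω := by
  have hδ : 0 < δ := hω.trans_le hωδ
  rw [cos_arccos (by linarith [div_pos hω hδ]) ((div_le_one hδ).2 hωδ)]
  field_simp

lemma mul_sin_arccos_div : δ * sin (arccos (ω / δ)) = √(δ ^ 2 - ω ^ 2) := by
  have hδ : 0 < δ := hω.trans_le hωδ
  rw [sin_arccos, show δ ^ 2 - ω ^ 2 = δ ^ 2 * (1 - (ω / δ) ^ 2) by field_simp,
    sqrt_mul (sq_nonneg _), sqrt_sq hδ.le]

lemma slabBallWidth_zero : slabBallWidth δ ω 0 = ω := by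
  rw [slabBallWidth, sub_zero, max_eq_right (arccos_nonneg _), mul_cos_arccos_div hω hωδ]

lemma le_slabBallWidth {θ : ℝ} (hθ : 0 ≤ θ) : ω ≤ slabBallWidth δ ω θ := by
  have hφ₀ := arccos_div_mem_Icc hω hωδ
  conv_lhs => rw [← mul_cos_arccos_div hω hωδ]
  exact mul_le_mul_of_nonneg_left (cos_le_cos_of_nonneg_of_le_pi (le_max_left _ _)
    (by linarith [hφ₀.2, pi_pos]) (max_le hφ₀.1 (by linarith))) (by linarith)

lemma abs_slabBallWidth_sub_le {θ θ' : ℝ} (hθ : 0 ≤ θ) (hθ' : 0 ≤ θ') :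
    |slabBallWidth δ ω θ - slabBallWidth δ ω θ'| ≤ √(δ ^ 2 - ω ^ 2) * |θ - θ'| := by
  have hφ₀ := arccos_div_mem_Icc hω hωδ
  have hmem : ∀ t, 0 ≤ t → max 0 (arccos (ω / δ) - t) ∈ Set.Icc 0 (arccos (ω / δ)) :=
    fun t ht => ⟨le_max_left _ _, max_le hφ₀.1 (by linarith)⟩
  have hδ : 0 ≤ δ := by linarith
  rw [slabBallWidth, slabBallWidth, ← mul_sub, abs_mul, abs_of_nonneg hδ,
    ← mul_sin_arccos_div hω hωδ, mul_assoc]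
  refine mul_le_mul_of_nonneg_left ?_ hδ
  refine (abs_cos_sub_cos_le_sin_mul hφ₀.2 (hmem θ hθ) (hmem θ' hθ')).trans ?_
  refine mul_le_mul_of_nonneg_left ?_
    (sin_nonneg_of_nonneg_of_le_pi hφ₀.1 (by linarith [hφ₀.2, pi_pos]))
  rw [max_comm, max_comm 0]
  exact (abs_max_sub_max_le_abs _ _ _).trans_eq (by rw [sub_sub_sub_cancel_left, abs_sub_comm])

end slabBallWidth

section innerProductSpace

variable {V : Type*} [NormedAddCommGroup V] [InnerProductSpace ℝ V]

def slabBall (e : V) (δ ω : ℝ) : Set V :=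
  closedBall 0 (δ / 2) ∩ {x | |⟪x, e⟫| ≤ ω / 2}

section slabBall

variable {e : V} {δ ω : ℝ}

lemma neg_mem_slabBall {x : V} (hx : x ∈ slabBall e δ ω) : -x ∈ slabBall e δ ω := by
  simpa [slabBall, inner_neg_left] using hx

lemma convex_slabBall : Convex ℝ (slabBall e δ ω) := by
  refine (convex_closedBall 0 _).inter ?_
  simp only [abs_le, Set.ofPred_and]
  exact (convex_halfSpace_ge ((innerₗ V).flip e).isLinear _).inter
    (convex_halfSpace_le ((innerₗ V).flip e).isLinear _)

lemma isCompact_slabBall [ProperSpace V] : IsCompact (slabBall e δ ω) :=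
  (isCompact_closedBall 0 _).inter_right <|
    isClosed_le (continuous_abs.comp (continuous_id.inner continuous_const)) continuous_const

lemma ball_subset_slabBall (he : ‖e‖ = 1) (hωδ : ω ≤ δ) :
    ball 0 (ω / 2) ⊆ slabBall e δ ω := fun x hx => by
  rw [mem_ball_zero_iff] at hx
  refine ⟨mem_closedBall_zero_iff.2 (by linarith), ?_⟩
  have := abs_real_inner_le_norm x e
  rw [he, mul_one] at this
  exact (this.trans hx.le : _)

lemma diam_slabBall (hδ : 0 ≤ δ) (hω : 0 ≤ ω) {e' : V} (he' : ‖e'‖ = 1) (hee' : ⟪e', e⟫ = 0) :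
    diam (slabBall e δ ω) = δ := by
  have hmem : (δ / 2) • e' ∈ slabBall e δ ω := by
    refine ⟨?_, ?_⟩
    · simp [norm_smul, he', abs_of_nonneg hδ]
    · simp only [Set.mem_ofPred_eq, real_inner_smul_left, hee', mul_zero, abs_zero]
      linarith
  refine le_antisymm ?_ ?_
  · calc diam (slabBall e δ ω) ≤ diam (closedBall (0 : V) (δ / 2)) :=
          diam_mono Set.inter_subset_left isBounded_closedBall
      _ ≤ 2 * (δ / 2) := diam_closedBall (by linarith)
      _ = δ := by ring
  · calc δ = dist ((δ / 2) • e') (-((δ / 2) • e')) := by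
          rw [dist_eq_norm, sub_neg_eq_add, ← two_smul ℝ, smul_smul, norm_smul, he', mul_one,
            norm_of_nonneg (by linarith)]
          ring
      _ ≤ diam (slabBall e δ ω) :=
          dist_le_diam_of_mem (isBounded_closedBall.subset Set.inter_subset_left) hmem
            (neg_mem_slabBall hmem)

lemma slabBall_neg : slabBall (-e) δ ω = slabBall e δ ω := by
  simp [slabBall, inner_neg_right]

end slabBall

section orthogonalPart

variable {e : V} (he : ‖e‖ = 1)
include he

lemma inner_sub_inner_smul_self (x : V) : ⟪x - ⟪x, e⟫ • e, e⟫ = 0 := by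
  simp [inner_sub_left, real_inner_smul_left, he]

lemma inner_eq_inner_mul_inner_add (x y : V) :
    ⟪x, y⟫ = ⟪x, e⟫ * ⟪y, e⟫ + ⟪x - ⟪x, e⟫ • e, y - ⟪y, e⟫ • e⟫ := by
  simp only [inner_sub_left, inner_sub_right, real_inner_smul_left, real_inner_smul_right,
    real_inner_self_eq_norm_sq, he, real_inner_comm e]
  ring

lemma norm_sub_inner_smul_sq (x : V) : ‖x - ⟪x, e⟫ • e‖ ^ 2 = ‖x‖ ^ 2 - ⟪x, e⟫ ^ 2 := by
  rw [← real_inner_self_eq_norm_sq, ← real_inner_self_eq_norm_sq,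
    inner_eq_inner_mul_inner_add he x x]
  ring

lemma cos_arccos_abs_inner {u : V} (hu : ‖u‖ = 1) : cos (arccos |⟪u, e⟫|) = |⟪u, e⟫| := by
  have := abs_real_inner_le_norm u e
  rw [hu, he, one_mul] at this
  exact cos_arccos (by linarith [abs_nonneg ⟪u, e⟫]) this

lemma sin_arccos_abs_inner {u : V} (hu : ‖u‖ = 1) :
    sin (arccos |⟪u, e⟫|) = ‖u - ⟪u, e⟫ • e‖ := by
  rw [sin_arccos, sq_abs, ← one_pow 2, ← hu, ← norm_sub_inner_smul_sq he, sqrt_sq (norm_nonneg _)]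

lemma norm_cos_smul_add_sin_smul_sq {g : V} (hge : ⟪g, e⟫ = 0) (ψ : ℝ) :
    ‖cos ψ • e + sin ψ • g‖ ^ 2 = cos ψ ^ 2 + sin ψ ^ 2 * ‖g‖ ^ 2 := by
  rw [norm_add_sq_real, real_inner_smul_left, real_inner_smul_right, real_inner_comm g, hge,
    norm_smul, norm_smul, he, norm_eq_abs, norm_eq_abs, mul_pow, mul_pow, sq_abs, sq_abs]
  ring

lemma norm_cos_smul_add_sin_smul {e' : V} (he' : ‖e'‖ = 1) (hee' : ⟪e', e⟫ = 0) (φ : ℝ) :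
    ‖cos φ • e + sin φ • e'‖ = 1 := by
  have hsq := norm_cos_smul_add_sin_smul_sq he hee' φ
  rw [he', one_pow, mul_one, cos_sq_add_sin_sq] at hsq
  rw [← sqrt_sq (norm_nonneg _), hsq, sqrt_one]

end orthogonalPart

section support

variable {δ ω : ℝ} (hω : 0 < ω) (hωδ : ω ≤ δ) {e : V} (he : ‖e‖ = 1)
include hω hωδ he

lemma smul_cos_smul_add_sin_smul_mem_slabBall {g : V} (hg : ‖g‖ ≤ 1) (hge : ⟪g, e⟫ = 0) {ψ : ℝ}
    (hψ : ψ ∈ Set.Icc (arccos (ω / δ)) (π / 2)) :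
    (δ / 2) • (cos ψ • e + sin ψ • g) ∈ slabBall e δ ω := by
  have hδ : 0 < δ := hω.trans_le hωδ
  have hφ₀ := arccos_div_mem_Icc hω hωδ
  have hcosψ : 0 ≤ cos ψ := cos_nonneg_of_mem_Icc ⟨by linarith [hφ₀.1, hψ.1, pi_pos], hψ.2⟩
  refine ⟨?_, ?_⟩
  · have hunit : ‖cos ψ • e + sin ψ • g‖ ^ 2 ≤ 1 := by
      rw [norm_cos_smul_add_sin_smul_sq he hge, ← cos_sq_add_sin_sq ψ]
      nlinarith [pow_le_one₀ (norm_nonneg g) hg (n := 2), sq_nonneg (sin ψ)]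
    rw [mem_closedBall_zero_iff, norm_smul, norm_of_nonneg (by linarith)]
    nlinarith [(sq_le_one_iff₀ (norm_nonneg _)).1 hunit]
  · have hcos_le : cos ψ ≤ cos (arccos (ω / δ)) :=
      cos_le_cos_of_nonneg_of_le_pi hφ₀.1 (by linarith [hψ.2, pi_pos]) hψ.1
    change |⟪(δ / 2) • (cos ψ • e + sin ψ • g), e⟫| ≤ ω / 2
    rw [real_inner_smul_left, inner_add_left, real_inner_smul_left, real_inner_smul_left, hge,
      real_inner_self_eq_norm_sq, he, abs_of_nonneg (by nlinarith), ← mul_cos_arccos_div hω hωδ]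
    nlinarith

variable {u : V} (hu : ‖u‖ = 1)
include hu

lemma inner_le_slabBallWidth {x : V} (hx : x ∈ slabBall e δ ω) :
    ⟪x, u⟫ ≤ slabBallWidth δ ω (arccos |⟪u, e⟫|) / 2 := by
  obtain ⟨hxδ, hxω⟩ := hx
  rw [mem_closedBall_zero_iff] at hxδ
  have hδ : 0 < δ := hω.trans_le hωδ
  have hsplit : ⟪x, u⟫ ≤ |⟪x, e⟫| * cos (arccos |⟪u, e⟫|) +
      ‖x - ⟪x, e⟫ • e‖ * sin (arccos |⟪u, e⟫|) := by
    rw [cos_arccos_abs_inner he hu, sin_arccos_abs_inner he hu, inner_eq_inner_mul_inner_add he,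
      ← abs_mul]
    exact add_le_add (le_abs_self _) (real_inner_le_norm _ _)
  refine hsplit.trans ?_
  rw [slabBallWidth, mul_div_right_comm]
  refine mul_cos_add_mul_sin_le (by linarith) (arccos_div_mem_Icc hω hωδ)
    ⟨arccos_nonneg _, arccos_le_pi_div_two.2 (abs_nonneg _)⟩ (norm_nonneg _) ?_ ?_
  · rw [div_mul_eq_mul_div, mul_cos_arccos_div hω hωδ]
    exact hxω
  · rw [norm_sub_inner_smul_sq he, sq_abs, add_sub_cancel]
    exact pow_le_pow_left₀ (norm_nonneg _) hxδ 2

lemma exists_inner_eq_slabBallWidth :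
    ∃ x ∈ slabBall e δ ω, ⟪x, u⟫ = slabBallWidth δ ω (arccos |⟪u, e⟫|) / 2 := by
  wlog he_u : 0 ≤ ⟪u, e⟫ generalizing e
  · simpa [slabBall_neg, inner_neg_right] using
      this (e := -e) (by rwa [norm_neg]) (by rw [inner_neg_right]; linarith)
  set θ := arccos |⟪u, e⟫|
  set φ₀ := arccos (ω / δ)
  set ψ := max θ φ₀
  set q := u - ⟪u, e⟫ • e
  -- the unit direction of `q`, or `0` if `u = e` (as `0⁻¹ = 0`); then `u = cos θ • e + sin θ • g`
  set g := ‖q‖⁻¹ • q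
  have hqe : ⟪q, e⟫ = 0 := inner_sub_inner_smul_self he u
  have hge : ⟪g, e⟫ = 0 := by rw [real_inner_smul_left, hqe, mul_zero]
  have hg : ‖g‖ ≤ 1 := by
    rw [norm_smul, norm_inv, norm_norm]
    exact inv_mul_le_one
  have hqu : ⟪q, u⟫ = ‖q‖ ^ 2 := by
    have hu_eq : u = q + ⟪u, e⟫ • e := (sub_add_cancel u _).symm
    rw [hu_eq, inner_add_right, real_inner_smul_right, hqe, mul_zero, add_zero,
      real_inner_self_eq_norm_sq]
  have hgu : ⟪g, u⟫ = sin θ := by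
    rw [real_inner_smul_left, hqu, sq, ← mul_assoc, inv_mul_mul_self]
    exact (sin_arccos_abs_inner he hu).symm
  have hcosθ : cos θ = ⟪u, e⟫ := by rw [cos_arccos_abs_inner he hu, abs_of_nonneg he_u]
  have hψ : ψ ∈ Set.Icc φ₀ (π / 2) := ⟨le_max_right _ _,
    max_le (arccos_le_pi_div_two.2 (abs_nonneg _)) (arccos_div_mem_Icc hω hωδ).2⟩
  refine ⟨(δ / 2) • (cos ψ • e + sin ψ • g),
    smul_cos_smul_add_sin_smul_mem_slabBall hω hωδ he hg hge hψ, ?_⟩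
  rw [real_inner_smul_left, inner_add_left, real_inner_smul_left, real_inner_smul_left,
    real_inner_comm, ← hcosθ, hgu, ← cos_sub, slabBallWidth,
    show ψ - θ = max 0 (φ₀ - θ) by rw [← max_sub_sub_right, sub_self]]
  ring

end support

end innerProductSpace

open InnerProductGeometry

section euclidean

variable {n : ℕ}

lemma widthFn_eq_two_mul_of_isGreatest {K : Set (EuclideanSpace ℝ (Fin n))}
    (hK : ∀ x ∈ K, -x ∈ K) {u : EuclideanSpace ℝ (Fin n)} {m : ℝ}
    (h : IsGreatest ((fun x => ⟪x, u⟫) '' K) m) : widthFn K u = 2 * m := by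
  have hleast : IsLeast ((fun x => ⟪x, u⟫) '' K) (-m) := by
    obtain ⟨⟨x, hx, hxm⟩, hm⟩ := h
    refine ⟨⟨-x, hK x hx, by simp [inner_neg_left, hxm]⟩, ?_⟩
    rintro _ ⟨y, hy, rfl⟩
    have := hm ⟨-y, hK y hy, rfl⟩
    simp only [inner_neg_left] at this
    linarith
  rw [widthFn, h.csSup_eq, hleast.csInf_eq]
  ring

lemma rho_comm (u v : EuclideanSpace ℝ (Fin n)) : rho u v = rho v u := by
  rw [rho, rho, real_inner_comm]

lemma rho_self {u : EuclideanSpace ℝ (Fin n)} (hu : ‖u‖ = 1) : rho u u = 0 := by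
  rw [rho, real_inner_self_eq_norm_sq, hu, one_pow, abs_one, arccos_one]

lemma rho_eq_min_angle {u v : EuclideanSpace ℝ (Fin n)} (hu : ‖u‖ = 1) (hv : ‖v‖ = 1) :
    rho u v = min (angle u v) (π - angle u v) := by
  rw [rho, angle, hu, hv, mul_one, div_one, ← arccos_neg, abs_eq_max_neg,
    antitone_arccos.map_max]

lemma rho_le_rho_add_rho {u v w : EuclideanSpace ℝ (Fin n)} (hu : ‖u‖ = 1) (hv : ‖v‖ = 1)
    (hw : ‖w‖ = 1) : rho u w ≤ rho u v + rho v w := by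
  rw [rho_eq_min_angle hu hw, rho_eq_min_angle hu hv, rho_eq_min_angle hv hw]
  have h₁ := angle_le_angle_add_angle u v w
  have h₂ := angle_le_angle_add_angle u (-v) w
  have h₃ := angle_le_angle_add_angle u v (-w)
  have h₄ := angle_le_angle_add_angle u (-v) (-w)
  rw [angle_neg_right, angle_neg_left] at h₂
  rw [angle_neg_right, angle_neg_right] at h₃
  rw [angle_neg_right, angle_neg_neg, angle_neg_right] at h₄
  rcases min_choice (angle u v) (π - angle u v) with h | h <;>
    rcases min_choice (angle v w) (π - angle v w) with h' | h' <;>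
    rw [h, h'] <;>
    linarith [min_le_left (angle u w) (π - angle u w), min_le_right (angle u w) (π - angle u w)]

lemma abs_rho_sub_rho_le {u v e : EuclideanSpace ℝ (Fin n)} (hu : ‖u‖ = 1) (hv : ‖v‖ = 1)
    (he : ‖e‖ = 1) : |rho u e - rho v e| ≤ rho u v := by
  rw [abs_sub_le_iff]
  constructor
  · linarith [rho_le_rho_add_rho hu hv he]
  · linarith [rho_le_rho_add_rho hv hu he, rho_comm u v]

lemma rho_cos_smul_add_sin_smul {e e' : EuclideanSpace ℝ (Fin n)} (he : ‖e‖ = 1)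
    (hee' : ⟪e', e⟫ = 0) {φ : ℝ} (hφ : φ ∈ Set.Icc 0 (π / 2)) :
    rho (cos φ • e + sin φ • e') e = φ := by
  have hcos : 0 ≤ cos φ := cos_nonneg_of_mem_Icc ⟨by linarith [hφ.1, pi_pos], hφ.2⟩
  rw [rho, inner_add_left, real_inner_smul_left, real_inner_smul_left, real_inner_self_eq_norm_sq,
    he, hee', one_pow, mul_one, mul_zero, add_zero, abs_of_nonneg hcos,
    arccos_cos hφ.1 (by linarith [hφ.2, pi_pos])]

section slabBall

variable {e : EuclideanSpace ℝ (Fin n)} (he : ‖e‖ = 1) {δ ω : ℝ} (hω : 0 < ω) (hωδ : ω ≤ δ)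
include he hω hωδ

lemma widthFn_slabBall {u : EuclideanSpace ℝ (Fin n)} (hu : ‖u‖ = 1) :
    widthFn (slabBall e δ ω) u = slabBallWidth δ ω (rho u e) := by
  refine (widthFn_eq_two_mul_of_isGreatest (fun x => neg_mem_slabBall)
    ⟨?_, ?_⟩).trans (mul_div_cancel₀ _ two_ne_zero)
  · obtain ⟨x, hx, hxu⟩ := exists_inner_eq_slabBallWidth hω hωδ he hu
    exact ⟨x, hx, hxu⟩
  · rintro _ ⟨x, hx, rfl⟩
    exact inner_le_slabBallWidth hω hωδ he hu hx

lemma iInf_widthFn_slabBall :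
    (⨅ u : sphere (0 : EuclideanSpace ℝ (Fin n)) 1, widthFn (slabBall e δ ω) u) = ω := by
  have hlower : ∀ u : sphere (0 : EuclideanSpace ℝ (Fin n)) 1, ω ≤ widthFn (slabBall e δ ω) u :=
    fun u => by
      rw [widthFn_slabBall he hω hωδ (norm_eq_of_mem_sphere u)]
      exact le_slabBallWidth hω hωδ (arccos_nonneg _)
  have he_sphere : e ∈ sphere (0 : EuclideanSpace ℝ (Fin n)) 1 := by simpa using he
  have : Nonempty (sphere (0 : EuclideanSpace ℝ (Fin n)) 1) := ⟨⟨e, he_sphere⟩⟩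
  refine le_antisymm ((ciInf_le ⟨ω, Set.forall_mem_range.2 hlower⟩ ⟨e, he_sphere⟩).trans_eq ?_)
    (le_ciInf hlower)
  rw [widthFn_slabBall he hω hωδ he, rho_self he, slabBallWidth_zero hω hωδ]

lemma abs_widthFn_slabBall_sub_le {u v : EuclideanSpace ℝ (Fin n)} (hu : ‖u‖ = 1)
    (hv : ‖v‖ = 1) :
    |widthFn (slabBall e δ ω) u - widthFn (slabBall e δ ω) v| ≤ √(δ ^ 2 - ω ^ 2) * rho u v := by
  rw [widthFn_slabBall he hω hωδ hu, widthFn_slabBall he hω hωδ hv]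
  exact (abs_slabBallWidth_sub_le hω hωδ (arccos_nonneg _) (arccos_nonneg _)).trans
    (mul_le_mul_of_nonneg_left (abs_rho_sub_rho_le hu hv he) (sqrt_nonneg _))

end slabBall

noncomputable def widthRatios (K : Set (EuclideanSpace ℝ (Fin n))) : Set ℝ :=
  {q : ℝ | ∃ u v : EuclideanSpace ℝ (Fin n), ‖u‖ = 1 ∧ ‖v‖ = 1 ∧
    u ≠ v ∧ u ≠ -v ∧ q = |widthFn K u - widthFn K v| / rho u v}

noncomputable def widthLipschitzConstant (K : Set (EuclideanSpace ℝ (Fin n))) : ℝ :=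
  sSup (widthRatios K)

section slabBall

variable {e : EuclideanSpace ℝ (Fin n)} (he : ‖e‖ = 1) {δ ω : ℝ} (hω : 0 < ω) (hωδ : ω ≤ δ)
include he hω hωδ

lemma sqrt_mem_upperBounds_widthRatios_slabBall :
    √(δ ^ 2 - ω ^ 2) ∈ upperBounds (widthRatios (slabBall e δ ω)) := by
  rintro _ ⟨u, v, hu, hv, -, -, rfl⟩
  exact div_le_of_le_mul₀ (arccos_nonneg _) (sqrt_nonneg _)
    (abs_widthFn_slabBall_sub_le he hω hωδ hu hv)

variable {e' : EuclideanSpace ℝ (Fin n)} (he' : ‖e'‖ = 1) (hee' : ⟪e', e⟫ = 0)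
include he' hee'

lemma abs_sub_slabBallWidth_div_mem_widthRatios {φ : ℝ} (hφ : φ ∈ Set.Ioo 0 (π / 2)) :
    |ω - slabBallWidth δ ω φ| / φ ∈ widthRatios (slabBall e δ ω) := by
  set v := cos φ • e + sin φ • e'
  have hv : ‖v‖ = 1 := norm_cos_smul_add_sin_smul he he' hee' φ
  have hsin : 0 < sin φ := sin_pos_of_pos_of_lt_pi hφ.1 (by linarith [hφ.2, pi_pos])
  have hve' : ⟪v, e'⟫ = sin φ := by
    rw [inner_add_left, real_inner_smul_left, real_inner_smul_left, real_inner_comm e', hee',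
      real_inner_self_eq_norm_sq, he']
    ring
  have hrho : rho v e = φ := rho_cos_smul_add_sin_smul he hee' ⟨hφ.1.le, hφ.2.le⟩
  refine ⟨e, v, he, hv, fun h => ?_, fun h => ?_, ?_⟩
  · rw [← h, real_inner_comm, hee'] at hve'
    linarith
  · rw [← neg_neg v, ← h, inner_neg_left, real_inner_comm, hee'] at hve'
    linarith
  · rw [widthFn_slabBall he hω hωδ he, rho_self he, slabBallWidth_zero hω hωδ,
      widthFn_slabBall he hω hωδ hv, rho_comm e v, hrho]

lemma widthLipschitzConstant_slabBall :
    widthLipschitzConstant (slabBall e δ ω) = √(δ ^ 2 - ω ^ 2) := by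
  have hub := sqrt_mem_upperBounds_widthRatios_slabBall he hω hωδ
  refine le_antisymm (csSup_le ⟨_, abs_sub_slabBallWidth_div_mem_widthRatios he hω hωδ he' hee'
    (φ := π / 4) ⟨by positivity, by linarith [pi_pos]⟩⟩ hub) ?_
  have hderiv : HasDerivAt (fun t => δ * cos (arccos (ω / δ) - t)) √(δ ^ 2 - ω ^ 2) 0 := by
    have := ((hasDerivAt_id 0).const_sub (arccos (ω / δ))).cos.const_mul δ
    rwa [id, sub_zero, neg_mul_neg, mul_one, mul_sin_arccos_div hω hωδ] at this
  refine le_of_tendsto hderiv.tendsto_slope_zero_right ?_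
  filter_upwards [Ioo_mem_nhdsGT pi_div_two_pos] with φ hφ
  calc φ⁻¹ • (δ * cos (arccos (ω / δ) - (0 + φ)) - δ * cos (arccos (ω / δ) - 0))
      ≤ |ω - slabBallWidth δ ω φ| / φ := by
        rw [smul_eq_mul, zero_add, sub_zero, mul_cos_arccos_div hω hωδ, inv_mul_eq_div,
          abs_sub_comm]
        exact div_le_div_of_nonneg_right ((sub_le_sub_right
          (mul_cos_sub_le_slabBallWidth (by linarith) φ) ω).trans (le_abs_self _)) hφ.1.le
    _ ≤ widthLipschitzConstant (slabBall e δ ω) :=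
        le_csSup ⟨_, hub⟩ (abs_sub_slabBallWidth_div_mem_widthRatios he hω hωδ he' hee' hφ)

end slabBall

end euclidean

theorem width_lipschitz_constant_optimal {n : ℕ} (hn : 2 ≤ n) (δ ω : ℝ)
    (hω : 0 < ω) (hδ : ω ≤ δ) :
    ∃ K : Set (EuclideanSpace ℝ (Fin n)),
      IsCompact K ∧ Convex ℝ K ∧ (interior K).Nonempty ∧
      Metric.diam K = δ ∧
      (⨅ u : sphere (0 : EuclideanSpace ℝ (Fin n)) 1, widthFn K u) = ω ∧
      sSup {q : ℝ | ∃ u v : EuclideanSpace ℝ (Fin n), ‖u‖ = 1 ∧ ‖v‖ = 1 ∧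
          u ≠ v ∧ u ≠ -v ∧ q = |widthFn K u - widthFn K v| / rho u v} =
        Real.sqrt (δ ^ 2 - ω ^ 2) := by
  set e := EuclideanSpace.single (⟨0, by omega⟩ : Fin n) (1 : ℝ)
  set e' := EuclideanSpace.single (⟨1, by omega⟩ : Fin n) (1 : ℝ)
  have he : ‖e‖ = 1 := by simp [e]
  have he' : ‖e'‖ = 1 := by simp [e']
  have hee' : ⟪e', e⟫ = 0 := by simp [e, e', EuclideanSpace.inner_single_left]
  exact ⟨slabBall e δ ω, isCompact_slabBall, convex_slabBall,
    ⟨0, interior_maximal (ball_subset_slabBall he hδ) isOpen_ball (mem_ball_self (by positivity))⟩,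
    diam_slabBall (by linarith) hω.le he' hee', iInf_widthFn_slabBall he hω hδ,
    widthLipschitzConstant_slabBall he hω hδ he' hee'⟩
end

section
/- If K ⊆ ℝⁿ is a convex body, O ∈ ∂K, e_K is continuous at O, and O' ∈ ∂K satisfies e_K(O) = |OO'|, then O' is an extreme point of K. In particular, e_K is continuous at every extreme point of K. -/
/-
If `O ∈ K` and `e_K(O) = |OO'|`, then `O'` is a point of `K` farthest from `O`, and in a strictly
convex norm a farthest point cannot lie inside a segment of `K`.

For continuity at an extreme point `p`, upper semicontinuity of `e_K` holds everywhere: chords of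
length at least `m` through nearby points converge, by compactness, to such a chord through the
limit point, collinearity being a closed condition. For lower semicontinuity, an extreme point
never lies strictly inside a chord, so `e_K(p)` is the largest distance from `p` to a point of `K`,
and that distance is almost attained at an interior point `w`. For small `t > 0` the point
`(1 - t) p + t w` is interior, so for `q` near `p` the segment from `(1 - t) q + t w` to `w` is a
chord through `q` of length `(1 - t) |qw|`, close to `|pw|`.
-/

open scoped RealInnerProductSpace
open Metric Filter

open Set Bornology Topology

theorem mem_extremePoints_of_forall_dist_le {E : Type*} [NormedAddCommGroup E] [NormedSpace ℝ E]
    [StrictConvexSpace ℝ E] {K : Set E} {o x : E} (hx : x ∈ K)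
    (hfar : ∀ z ∈ K, dist o z ≤ dist o x) : x ∈ K.extremePoints ℝ := by
  refine mem_extremePoints.2 ⟨hx, fun x₁ hx₁ x₂ hx₂ hseg => ?_⟩
  obtain rfl | hne := eq_or_ne x₁ x₂
  · rw [openSegment_same, mem_singleton_iff] at hseg
    exact ⟨hseg.symm, hseg.symm⟩
  obtain ⟨a, b, ha, hb, hab, rfl⟩ := hseg
  have hdist : ∀ z ∈ K, ‖z - o‖ ≤ dist o (a • x₁ + b • x₂) := fun z hz => by
    rw [← dist_eq_norm, dist_comm]; exact hfar z hz
  have hcombo : a • (x₁ - o) + b • (x₂ - o) = a • x₁ + b • x₂ - o := by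
    rw [smul_sub, smul_sub, sub_add_sub_comm, ← add_smul, hab, one_smul]
  have hlt :=
    norm_combo_lt_of_ne (hdist x₁ hx₁) (hdist x₂ hx₂) (sub_left_injective.ne hne) ha hb hab
  rw [hcombo, dist_comm, dist_eq_norm] at hlt
  exact (lt_irrefl _ hlt).elim

theorem Collinear.dist_le_max_of_mem_extremePoints {E : Type*} [NormedAddCommGroup E]
    [NormedSpace ℝ E] {K : Set E} {p x y : E} (hcol : Collinear ℝ ({p, x, y} : Set E))
    (hp : p ∈ K.extremePoints ℝ) (hx : x ∈ K) (hy : y ∈ K) :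
    dist x y ≤ max (dist p x) (dist p y) := by
  rcases hcol.wbtw_or_wbtw_or_wbtw with h | h | h
  · exact le_max_of_le_right ((le_add_of_nonneg_left dist_nonneg).trans_eq h.dist_add_dist)
  · exact le_max_of_le_left
      ((le_add_of_nonneg_right dist_nonneg).trans_eq (h.dist_add_dist.trans (dist_comm x p)))
  · rcases (mem_extremePoints_iff_forall_segment.1 hp).2 y hy x hx (mem_segment_iff_wbtw.2 h)
      with rfl | rfl
    · exact le_max_of_le_left (dist_comm _ _).le
    · exact le_max_of_le_right le_rfl

section Chords

variable {E : Type*} [NormedAddCommGroup E] [NormedSpace ℝ E]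

theorem isClosed_setOf_collinear_triple :
    IsClosed {p : E × E × E | Collinear ℝ ({p.1, p.2.1, p.2.2} : Set E)} := by
  simp_rw [collinear_iff_not_affineIndependent_set]
  exact (isOpen_setOfPred_affineIndependent.preimage
    (by fun_prop : Continuous fun p : E × E × E => ![p.1, p.2.1, p.2.2])).isClosed_compl

theorem IsCompact.isClosed_setOf_exists_chord_ge {K : Set E} (hK : IsCompact K) (m : ℝ) :
    IsClosed {q : E | ∃ x ∈ K, ∃ y ∈ K,
      Collinear ℝ ({q, x, y} : Set E) ∧ m ≤ dist x y} := by
  have := isCompact_iff_compactSpace.mp hK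
  have hS : IsClosed {p : E × K × K |
      Collinear ℝ ({p.1, (p.2.1 : E), (p.2.2 : E)} : Set E) ∧ m ≤ dist (p.2.1 : E) p.2.2} :=
    (IsClosed.preimage (f := fun p : E × K × K => (p.1, (p.2.1 : E), (p.2.2 : E)))
      (by fun_prop) isClosed_setOf_collinear_triple).inter
      (isClosed_le continuous_const
        ((continuous_subtype_val.comp continuous_fst).dist
          (continuous_subtype_val.comp continuous_snd)).snd')
  convert isClosedMap_fst_of_compactSpace _ hS using 1
  ext q
  simp [and_left_comm]

end Chords

section eFn

variable {n : ℕ} {K : Set (EuclideanSpace ℝ (Fin n))}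

theorem eFn_nonneg (q : EuclideanSpace ℝ (Fin n)) : 0 ≤ eFn K q :=
  Real.sSup_nonneg (by rintro _ ⟨x, -, y, -, -, rfl⟩; exact dist_nonneg)

theorem dist_le_eFn_of_collinear (hK : IsBounded K) {q x y : EuclideanSpace ℝ (Fin n)}
    (hx : x ∈ K) (hy : y ∈ K)
    (hcol : Collinear ℝ ({q, x, y} : Set (EuclideanSpace ℝ (Fin n)))) :
    dist x y ≤ eFn K q := by
  obtain ⟨C, hC⟩ := isBounded_iff.mp hK
  exact le_csSup ⟨C, by rintro _ ⟨x, hx, y, hy, -, rfl⟩; exact hC hx hy⟩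
    ⟨x, hx, y, hy, hcol, rfl⟩

theorem dist_le_eFn (hK : IsBounded K) {q z : EuclideanSpace ℝ (Fin n)} (hq : q ∈ K)
    (hz : z ∈ K) : dist q z ≤ eFn K q :=
  dist_le_eFn_of_collinear hK hq hz (by simpa using collinear_pair ℝ q z)

theorem exists_dist_gt_of_lt_eFn {p : EuclideanSpace ℝ (Fin n)} (hp : p ∈ K.extremePoints ℝ)
    {r : ℝ} (hr : r < eFn K p) : ∃ z ∈ K, r < dist p z := by
  obtain ⟨_, ⟨x, hx, y, hy, hcol, rfl⟩, hlt⟩ :=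
    exists_lt_of_lt_csSup
      (by exact ⟨0, p, hp.1, p, hp.1, by simpa using collinear_pair ℝ p p, by simp⟩) hr
  rcases lt_max_iff.1 (hlt.trans_le (hcol.dist_le_max_of_mem_extremePoints hp hx hy)) with h | h
  exacts [⟨x, hx, h⟩, ⟨y, hy, h⟩]

theorem upperSemicontinuous_eFn (hK : IsCompact K) : UpperSemicontinuous (eFn K) := by
  intro p r hr
  obtain ⟨m, hpm, hmr⟩ := exists_between hr
  have hshort : ∀ᶠ q in 𝓝 p, q ∉ {q | ∃ x ∈ K, ∃ y ∈ K,
      Collinear ℝ ({q, x, y} : Set (EuclideanSpace ℝ (Fin n))) ∧ m ≤ dist x y} :=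
    (hK.isClosed_setOf_exists_chord_ge m).isOpen_compl.mem_nhds fun ⟨x, hx, y, hy, hcol, hm⟩ =>
      (hpm.trans_le hm).not_ge (dist_le_eFn_of_collinear hK.isBounded hx hy hcol)
  filter_upwards [hshort] with q hq
  refine lt_of_le_of_lt (Real.sSup_le ?_ ((eFn_nonneg p).trans hpm.le)) hmr
  rintro _ ⟨x, hx, y, hy, hcol, rfl⟩
  exact le_of_not_ge fun hm => hq ⟨x, hx, y, hy, hcol, hm⟩

theorem lowerSemicontinuousAt_eFn (hKb : IsBounded K) (hKconv : Convex ℝ K)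
    (hKint : (interior K).Nonempty) {p : EuclideanSpace ℝ (Fin n)}
    (hp : p ∈ K.extremePoints ℝ) :
    LowerSemicontinuousAt (eFn K) p := by
  intro r hr
  obtain ⟨z, hz, hrz⟩ := exists_dist_gt_of_lt_eFn hp hr
  obtain ⟨w, hrw, hw⟩ : ∃ w, r < dist p w ∧ w ∈ interior K := by
    have hz' : z ∈ closure (interior K) := by
      rw [hKconv.closure_interior_eq_closure_of_nonempty_interior hKint]
      exact subset_closure hz
    exact mem_closure_iff_nhds.1 hz' _
      ((continuous_const.dist continuous_id).continuousAt.eventually (lt_mem_nhds hrz))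
  obtain ⟨t, ⟨hrt, ht1⟩, ht0⟩ :
      ∃ t : ℝ, (r < (1 - t) * dist p w ∧ t < 1) ∧ 0 < t := by
    have hcont : ContinuousAt (fun t : ℝ => (1 - t) * dist p w) 0 := by fun_prop
    have hnear := (hcont.eventually (lt_mem_nhds (by simpa using hrw))).and (gt_mem_nhds one_pos)
    exact ((hnear.filter_mono nhdsWithin_le_nhds).and self_mem_nhdsWithin).exists (f := 𝓝[>] 0)
  have hinK : ∀ᶠ q in 𝓝 p, AffineMap.lineMap q w t ∈ K := by
    have hint : AffineMap.lineMap p w t ∈ interior K := by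
      rw [AffineMap.lineMap_apply_module]
      exact hKconv.combo_closure_interior_mem_interior (subset_closure hp.1) hw (by linarith) ht0
        (by ring)
    have hcont : ContinuousAt (fun q => AffineMap.lineMap q w t) p := by
      simp_rw [AffineMap.lineMap_apply_module]; fun_prop
    exact hcont.eventually (isOpen_interior.mem_nhds hint) |>.mono fun _ => (interior_subset ·)
  have hlong : ∀ᶠ q in 𝓝 p, r < (1 - t) * dist q w :=
    ((continuous_id.dist continuous_const).const_mul _).continuousAt.eventually (lt_mem_nhds hrt)
  filter_upwards [hinK, hlong] with q hq hrq
  calc r < (1 - t) * dist q w := hrq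
    _ = dist (AffineMap.lineMap q w t) w := by
      rw [dist_lineMap_right, Real.norm_of_nonneg (by linarith)]
    _ ≤ eFn K q := dist_le_eFn_of_collinear hKb hq (interior_subset hw)
      (wbtw_lineMap_iff.2 (Or.inr ⟨ht0.le, ht1.le⟩)).collinear

theorem continuousAt_eFn_of_mem_extremePoints (hK : IsCompact K) (hKconv : Convex ℝ K)
    (hKint : (interior K).Nonempty) {p : EuclideanSpace ℝ (Fin n)}
    (hp : p ∈ K.extremePoints ℝ) :
    ContinuousAt (eFn K) p :=
  continuousAt_iff_lower_upperSemicontinuousAt.2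
    ⟨lowerSemicontinuousAt_eFn hK.isBounded hKconv hKint hp, upperSemicontinuous_eFn hK p⟩

end eFn

theorem eFn_continuity_endpoint_extreme_general {n : ℕ}
    (K : Set (EuclideanSpace ℝ (Fin n)))
    (hKc : IsCompact K) (hKconv : Convex ℝ K) (hKint : (interior K).Nonempty)
    (O : EuclideanSpace ℝ (Fin n)) (hO : O ∈ frontier K)
    (O' : EuclideanSpace ℝ (Fin n)) (hO' : O' ∈ frontier K)
    (heq : eFn K O = dist O O') :
    O' ∈ K.extremePoints ℝ ∧
    ∀ x ∈ K.extremePoints ℝ, ContinuousAt (eFn K) x := by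
  have hOK : O ∈ K := hKc.isClosed.frontier_subset hO
  have hfar : ∀ z ∈ K, dist O z ≤ dist O O' := fun z hz =>
    heq ▸ dist_le_eFn hKc.isBounded hOK hz
  exact ⟨mem_extremePoints_of_forall_dist_le (hKc.isClosed.frontier_subset hO') hfar,
    fun x hx => continuousAt_eFn_of_mem_extremePoints hKc hKconv hKint hx⟩

theorem eFn_continuity_endpoint_extreme {n : ℕ} (hn : 2 ≤ n)
    (K : Set (EuclideanSpace ℝ (Fin n)))
    (hKc : IsCompact K) (hKconv : Convex ℝ K) (hKint : (interior K).Nonempty)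
    (O : EuclideanSpace ℝ (Fin n)) (hO : O ∈ frontier K)
    (hcont : ContinuousAt (eFn K) O)
    (O' : EuclideanSpace ℝ (Fin n)) (hO' : O' ∈ frontier K)
    (heq : eFn K O = dist O O') :
    O' ∈ K.extremePoints ℝ ∧
    ∀ x ∈ K.extremePoints ℝ, ContinuousAt (eFn K) x :=
  eFn_continuity_endpoint_extreme_general K hKc hKconv hKint O hO O' hO' heq
end
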